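/- The map γ ↦ σ_γ, where σ_γ(i) = i + l_i/2 − h_i, is a bijection from the set of Dyck paths of length 2n onto the set of 231-avoiding permutations of [n]. -/

import Mathlib

/-- A Dyck path of length `2n`, as a function `ℕ → ℤ`. -/
def IsDyckPathFn (n : ℕ) (γ : ℕ → ℤ) : Prop :=
  γ 0 = 0 ∧ γ (2 * n) = 0 ∧ (∀ x, x ≤ 2 * n → 0 ≤ γ x) ∧
    (∀ x, x < 2 * n → γ (x + 1) = γ x + 1 ∨ γ (x + 1) = γ x - 1)

/-- The sorted list of positions in `[1, 2n]` reached by an up-step of `γ`. -/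
def upPositions (n : ℕ) (γ : ℕ → ℤ) : List ℕ :=
  ((Finset.Icc 1 (2 * n)).filter (fun x => γ x = γ (x - 1) + 1)).sort (· ≤ ·)

/-- `vPos n γ i` is the position just after the `i`-th up-step of `γ`. -/
def vPos (n : ℕ) (γ : ℕ → ℤ) (i : ℕ) : ℕ := (upPositions n γ).getD (i - 1) 0

/-- The height of `γ` just after its `i`-th up-step. -/
def hgt (n : ℕ) (γ : ℕ → ℤ) (i : ℕ) : ℤ := γ (vPos n γ i)

/-- The length of the excursion of `γ` started by its `i`-th up-step: the least
`l ≥ 1` with `γ (vPos i - 1 + l) = hgt i - 1`. -/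
noncomputable def excLen (n : ℕ) (γ : ℕ → ℤ) (i : ℕ) : ℕ :=
  sInf {l : ℕ | 1 ≤ l ∧ γ (vPos n γ i - 1 + l) = hgt n γ i - 1}

/-- The 231-avoiding permutation associated to a Dyck path:
`σ_γ i = i + l_i / 2 - h_i`. -/
noncomputable def perm231 (n : ℕ) (γ : ℕ → ℤ) (i : ℕ) : ℤ :=
  (i : ℤ) + ((excLen n γ i / 2 : ℕ) : ℤ) - hgt n γ i

/-- Dyck paths of length `2n` (pinned to zero beyond `2n`). -/
def DyckSet (n : ℕ) : Set (ℕ → ℤ) :=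
  {γ | IsDyckPathFn n γ ∧ ∀ x, 2 * n ≤ x → γ x = 0}

/-- 231-avoiding permutations of `[n]`, encoded as functions `ℕ → ℤ` that map
`{1,…,n}` bijectively onto `{1,…,n}`, vanish elsewhere, and avoid the pattern
231. -/
def Avoid231Set (n : ℕ) : Set (ℕ → ℤ) :=
  {f | Set.BijOn f (Set.Icc 1 n) (Set.Icc (1 : ℤ) (n : ℤ)) ∧
    (∀ i, i ∉ Set.Icc 1 n → f i = 0) ∧
    ¬ ∃ i j k, i ∈ Set.Icc 1 n ∧ j ∈ Set.Icc 1 n ∧ k ∈ Set.Icc 1 n ∧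
      i < j ∧ j < k ∧ f k < f i ∧ f i < f j}

/-! The bijection is the first-return decomposition read on both sides. A nonempty Dyck path
is `U γ₁ D γ₂` with `γ₁` of length `2(m-1)`; a 231-avoiding permutation with `σ 1 = m` has the
values `1, …, m-1` exactly at the positions `2, …, m` (a larger value there, or a smaller one
further right, would form a 231 with the first entry), so it is `m` followed by a 231-avoider
of `[m-1]` and a shifted 231-avoider of `[n-m]`. Since `x + γ x` is twice the number of
up-steps up to `x`, the `i`-th up-step is the unique up-step `v` with `v + γ v = 2i`; hence the
excursions of `γ₁` and `γ₂` reappear in `U γ₁ D γ₂` with heights and indices shifted so that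
`σ_{Uγ₁Dγ₂} = (m, σ_{γ₁}, σ_{γ₂} + m)`, and induction on `n` finishes the proof. -/

theorem exists_apply_eq_of_unit_steps {γ : ℕ → ℤ} {a b : ℕ} (hab : a ≤ b)
    (hstep : ∀ x, a ≤ x → x < b → γ (x + 1) = γ x + 1 ∨ γ (x + 1) = γ x - 1)
    {c : ℤ} (hb : γ b ≤ c) (ha : c ≤ γ a) : ∃ x, a ≤ x ∧ x ≤ b ∧ γ x = c := by
  induction b, hab using Nat.le_induction with
  | base => exact ⟨a, le_rfl, le_rfl, le_antisymm hb ha⟩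
  | succ b hab ih =>
    by_cases hc : γ b ≤ c
    · obtain ⟨x, hax, hxb, hx⟩ := ih (fun x hax hxb => hstep x hax (by omega)) hc
      exact ⟨x, hax, by omega, hx⟩
    · exact ⟨b + 1, by omega, le_rfl, by rcases hstep b hab (by omega) with h | h <;> omega⟩

def upSteps (n : ℕ) (γ : ℕ → ℤ) : Finset ℕ :=
  (Finset.Icc 1 (2 * n)).filter (fun x => γ x = γ (x - 1) + 1)

theorem vPos_eq_nth (n : ℕ) (γ : ℕ → ℤ) (i : ℕ) :
    vPos n γ i = Nat.nth (· ∈ upSteps n γ) (i - 1) := by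
  rw [Nat.nth_eq_getD_sort (p := (· ∈ upSteps n γ)) (upSteps n γ).finite_toSet]
  show (upSteps n γ).sort.getD (i - 1) 0 = _
  congr 2
  ext; simp

namespace IsDyckPathFn

variable {n : ℕ} {γ : ℕ → ℤ}

theorem two_mul_count_upSteps (hγ : IsDyckPathFn n γ) {x : ℕ} (hx : x ≤ 2 * n) :
    2 * (Nat.count (· ∈ upSteps n γ) (x + 1) : ℤ) = x + γ x := by
  induction x with
  | zero => simp [Nat.count_succ, upSteps, hγ.1]
  | succ x ih =>
    have hmem : x + 1 ∈ upSteps n γ ↔ γ (x + 1) = γ x + 1 := by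
      simp [upSteps, hx]
    have := ih (by omega)
    rw [Nat.count_succ]
    rcases hγ.2.2.2 x (by omega) with h | h
    · rw [if_pos (hmem.mpr h)]; push_cast; omega
    · rw [if_neg (by rw [hmem]; omega)]; push_cast; omega

theorem card_upSteps (hγ : IsDyckPathFn n γ) : (upSteps n γ).card = n := by
  have h := hγ.two_mul_count_upSteps le_rfl
  rw [hγ.2.1, Nat.count_eq_card_filter_range, Finset.filter_mem_eq_inter,
    Finset.inter_eq_right.mpr] at h
  · omega
  · intro x hx
    simp only [upSteps, Finset.mem_filter, Finset.mem_Icc] at hx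
    simp only [Finset.mem_range]; omega

theorem vPos_eq_iff (hγ : IsDyckPathFn n γ) {i v : ℕ} (hi : 1 ≤ i) (hin : i ≤ n) :
    vPos n γ i = v ↔ v ∈ upSteps n γ ∧ (v : ℤ) + γ v = 2 * i := by
  have hcount : ∀ w ∈ upSteps n γ,
      (w : ℤ) + γ w = 2 * i ↔ Nat.count (· ∈ upSteps n γ) w = i - 1 := by
    intro w hw
    have hw2 : w ≤ 2 * n := (Finset.mem_Icc.mp (Finset.mem_filter.mp hw).1).2
    rw [← hγ.two_mul_count_upSteps hw2, Nat.count_succ, if_pos hw]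
    omega
  rw [vPos_eq_nth]
  constructor
  · rintro rfl
    have hlt : i - 1 < (upSteps n γ).finite_toSet.toFinset.card := by
      simpa [hγ.card_upSteps] using (by omega : i - 1 < n)
    have hmem := Nat.nth_mem_of_lt_card _ hlt
    exact ⟨hmem, (hcount _ hmem).mpr (Nat.count_nth_of_lt_card_finite _ hlt)⟩
  · rintro ⟨hv, hval⟩
    rw [← (hcount v hv).mp hval, Nat.nth_count hv]

theorem excLen_spec (hγ : IsDyckPathFn n γ) {i : ℕ} (hi : 1 ≤ i) (hin : i ≤ n) :
    vPos n γ i - 1 + excLen n γ i ≤ 2 * n ∧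
      IsLeast {l | 1 ≤ l ∧ γ (vPos n γ i - 1 + l) = hgt n γ i - 1} (excLen n γ i) := by
  obtain ⟨hv, -⟩ := (hγ.vPos_eq_iff hi hin).mp rfl
  set v := vPos n γ i
  simp only [upSteps, Finset.mem_filter, Finset.mem_Icc] at hv
  have hpos := hγ.2.2.1 (v - 1) (by omega)
  obtain ⟨x, hvx, hx2n, hx⟩ := exists_apply_eq_of_unit_steps hv.1.2
    (fun x _ hx => hγ.2.2.2 x hx) (c := γ v - 1) (by rw [hγ.2.1]; omega) (by omega)
  have hmem : x - (v - 1) ∈ {l | 1 ≤ l ∧ γ (v - 1 + l) = hgt n γ i - 1} :=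
    ⟨by omega, by rw [show v - 1 + (x - (v - 1)) = x by omega, hx]; rfl⟩
  have hle : excLen n γ i ≤ x - (v - 1) := Nat.sInf_le hmem
  exact ⟨by omega, Nat.sInf_mem ⟨_, hmem⟩, fun l hl => Nat.sInf_le hl⟩

variable {k : ℕ} {δ : ℕ → ℤ} {a c j : ℕ}

-- `a + c = 2 * j` says that `γ` has exactly `j` up-steps up to position `a`.
theorem vPos_shift (hγ : IsDyckPathFn n γ) (hδ : IsDyckPathFn k δ) (hac : a + c = 2 * j)
    (hjk : j + k ≤ n) (hshift : ∀ x ≤ 2 * k, γ (a + x) = δ x + c) {i : ℕ} (hi : 1 ≤ i)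
    (hik : i ≤ k) : vPos n γ (i + j) = a + vPos k δ i := by
  obtain ⟨hv, hval⟩ := (hδ.vPos_eq_iff hi hik).mp rfl
  set v := vPos k δ i
  simp only [upSteps, Finset.mem_filter, Finset.mem_Icc] at hv
  refine (hγ.vPos_eq_iff (by omega) (by omega)).mpr ⟨?_, ?_⟩
  · simp only [upSteps, Finset.mem_filter, Finset.mem_Icc]
    refine ⟨by omega, ?_⟩
    rw [show a + v - 1 = a + (v - 1) by omega, hshift v hv.1.2, hshift (v - 1) (by omega), hv.2]
    ring
  · push_cast
    rw [hshift v hv.1.2]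
    omega

theorem perm231_shift (hγ : IsDyckPathFn n γ) (hδ : IsDyckPathFn k δ) (hac : a + c = 2 * j)
    (hjk : j + k ≤ n) (hshift : ∀ x ≤ 2 * k, γ (a + x) = δ x + c) {i : ℕ} (hi : 1 ≤ i)
    (hik : i ≤ k) : perm231 n γ (i + j) = perm231 k δ i + j - c := by
  have hv := vPos_shift hγ hδ hac hjk hshift hi hik
  obtain ⟨hv1, -⟩ := (hδ.vPos_eq_iff hi hik).mp rfl
  simp only [upSteps, Finset.mem_filter, Finset.mem_Icc] at hv1
  have hh : hgt n γ (i + j) = hgt k δ i + c := by rw [hgt, hgt, hv, hshift _ hv1.1.2]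
  obtain ⟨hend, hmem, hmin⟩ := hδ.excLen_spec hi hik
  set v := vPos k δ i
  have htransfer : ∀ l, v - 1 + l ≤ 2 * k →
      (γ (vPos n γ (i + j) - 1 + l) = hgt n γ (i + j) - 1 ↔ δ (v - 1 + l) = hgt k δ i - 1) := by
    intro l hl
    rw [hh, hv, show a + v - 1 + l = a + (v - 1 + l) by omega, hshift _ hl]
    omega
  have hl : excLen n γ (i + j) = excLen k δ i := by
    refine IsLeast.csInf_eq ⟨⟨hmem.1, (htransfer _ hend).mpr hmem.2⟩, fun l ⟨hl1, hl⟩ => ?_⟩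
    by_cases hlk : v - 1 + l ≤ 2 * k
    · exact hmin ⟨hl1, (htransfer l hlk).mp hl⟩
    · omega
  simp only [perm231, hh, hl]
  push_cast
  ring

end IsDyckPathFn

theorem nonneg_of_mem_dyckSet {n : ℕ} {γ : ℕ → ℤ} (hγ : γ ∈ DyckSet n) (x : ℕ) : 0 ≤ γ x := by
  rcases le_or_gt x (2 * n) with hx | hx
  · exact hγ.1.2.2.1 x hx
  · rw [hγ.2 x hx.le]

-- The Dyck path `U γ₁ D γ₂`, where `γ₁` has length `2 * (m - 1)`.
def joinPath (m : ℕ) (γ₁ γ₂ : ℕ → ℤ) : ℕ → ℤ := fun x =>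
  if x = 0 then 0 else if x < 2 * m then γ₁ (x - 1) + 1 else γ₂ (x - 2 * m)

section joinPath

variable {m : ℕ} {γ₁ γ₂ : ℕ → ℤ}

theorem joinPath_of_lt {x : ℕ} (hx : 0 < x) (hxm : x < 2 * m) :
    joinPath m γ₁ γ₂ x = γ₁ (x - 1) + 1 := by
  simp [joinPath, hx.ne', hxm]

theorem joinPath_of_le (hm : 1 ≤ m) {x : ℕ} (hmx : 2 * m ≤ x) :
    joinPath m γ₁ γ₂ x = γ₂ (x - 2 * m) := by
  simp [joinPath, show x ≠ 0 by omega, hmx]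

theorem joinPath_mem {n : ℕ} (hm : 1 ≤ m) (hmn : m ≤ n) (h₁ : γ₁ ∈ DyckSet (m - 1))
    (h₂ : γ₂ ∈ DyckSet (n - m)) : joinPath m γ₁ γ₂ ∈ DyckSet n := by
  have h₁end : γ₁ (2 * m - 2) = 0 := by rw [show 2 * m - 2 = 2 * (m - 1) by omega, h₁.1.2.1]
  refine ⟨⟨rfl, ?_, fun x _ => ?_, fun x hx => ?_⟩, fun x hx => ?_⟩
  · rw [joinPath_of_le hm (by omega), show 2 * n - 2 * m = 2 * (n - m) by omega, h₂.1.2.1]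
  · rcases Nat.eq_zero_or_pos x with rfl | hx0
    · rfl
    rcases lt_or_ge x (2 * m) with hxm | hxm
    · rw [joinPath_of_lt hx0 hxm]; linarith [nonneg_of_mem_dyckSet h₁ (x - 1)]
    · rw [joinPath_of_le hm hxm]; exact nonneg_of_mem_dyckSet h₂ _
  · rcases Nat.eq_zero_or_pos x with rfl | hx0
    · left; rw [joinPath_of_lt (by omega) (by omega), h₁.1.1]; rfl
    rcases lt_trichotomy (x + 1) (2 * m) with hxm | hxm | hxm
    · rw [joinPath_of_lt hx0 (by omega), joinPath_of_lt (by omega) hxm,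
        show x + 1 - 1 = x - 1 + 1 by omega]
      rcases h₁.1.2.2.2 (x - 1) (by omega) with h | h <;> omega
    · right
      rw [joinPath_of_lt hx0 (by omega), joinPath_of_le hm hxm.ge, show x - 1 = 2 * m - 2 by omega,
        h₁end, show x + 1 - 2 * m = 0 by omega, h₂.1.1]
      ring
    · rw [joinPath_of_le hm (by omega), joinPath_of_le hm (by omega),
        show x + 1 - 2 * m = x - 2 * m + 1 by omega]
      exact h₂.1.2.2.2 _ (by omega)
  · rw [joinPath_of_le hm (by omega)]
    exact h₂.2 _ (by omega)

end joinPath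

namespace IsDyckPathFn

variable {n : ℕ} {γ : ℕ → ℤ}

theorem exists_first_return (hγ : IsDyckPathFn n γ) (hn : 1 ≤ n) :
    ∃ m, 1 ≤ m ∧ m ≤ n ∧ γ (2 * m) = 0 ∧ ∀ x, 0 < x → x < 2 * m → 0 < γ x := by
  classical
  have hex : ∃ r, 0 < r ∧ γ r = 0 := ⟨2 * n, by omega, hγ.2.1⟩
  obtain ⟨hr0, hr⟩ := Nat.find_spec hex
  have hr2n : Nat.find hex ≤ 2 * n := Nat.find_min' hex ⟨by omega, hγ.2.1⟩
  have heven := hγ.two_mul_count_upSteps hr2n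
  refine ⟨Nat.count (· ∈ upSteps n γ) (Nat.find hex + 1), by omega, by omega, ?_,
    fun x hx hxr => lt_of_le_of_ne (hγ.2.2.1 x (by omega)) fun h =>
      Nat.find_min hex (by omega) ⟨hx, h.symm⟩⟩
  rwa [show 2 * Nat.count (· ∈ upSteps n γ) (Nat.find hex + 1) = Nat.find hex by omega]

theorem inner_mem_dyckSet (hγ : IsDyckPathFn n γ) {m : ℕ} (hm : 1 ≤ m) (hmn : m ≤ n)
    (hret : γ (2 * m) = 0) (hpos : ∀ x, 0 < x → x < 2 * m → 0 < γ x) :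
    (fun x => if x ≤ 2 * (m - 1) then γ (1 + x) - 1 else 0) ∈ DyckSet (m - 1) := by
  have hlast : γ (2 * m - 1) = 1 := by
    have := hpos (2 * m - 1) (by omega) (by omega)
    rcases hγ.2.2.2 (2 * m - 1) (by omega) with h | h <;>
      rw [show 2 * m - 1 + 1 = 2 * m by omega, hret] at h <;> omega
  refine ⟨⟨?_, ?_, fun x hx => ?_, fun x hx => ?_⟩, fun x hx => ?_⟩ <;> dsimp only
  · have := hpos 1 (by omega) (by omega)
    rcases hγ.2.2.2 0 (by omega) with h | h <;> rw [hγ.1] at h <;> simp [h] at this ⊢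
  · rw [if_pos le_rfl, show 1 + 2 * (m - 1) = 2 * m - 1 by omega, hlast, sub_self]
  · rw [if_pos hx]
    have := hpos (1 + x) (by omega) (by omega)
    omega
  · rw [if_pos (by omega), if_pos (by omega), show 1 + (x + 1) = 1 + x + 1 by omega]
    rcases hγ.2.2.2 (1 + x) (by omega) with h | h <;> omega
  · split_ifs with hx'
    · rw [show 1 + x = 2 * m - 1 by omega, hlast, sub_self]
    · rfl

end IsDyckPathFn

theorem suffix_mem_dyckSet {n m : ℕ} {γ : ℕ → ℤ} (hγ : γ ∈ DyckSet n) (hmn : m ≤ n)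
    (hret : γ (2 * m) = 0) :
    (fun x => γ (2 * m + x)) ∈ DyckSet (n - m) := by
  obtain ⟨⟨-, hend, hnonneg, hstep⟩, hpin⟩ := hγ
  refine ⟨⟨by simpa using hret, ?_, fun x hx => hnonneg _ (by omega), fun x hx => ?_⟩,
    fun x hx => hpin _ (by omega)⟩
  · dsimp only
    rwa [show 2 * m + 2 * (n - m) = 2 * n by omega]
  · dsimp only
    rw [← add_assoc]
    exact hstep _ (by omega)

theorem exists_eq_joinPath {n : ℕ} {γ : ℕ → ℤ} (hn : 1 ≤ n) (hγ : γ ∈ DyckSet n) :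
    ∃ m γ₁ γ₂, 1 ≤ m ∧ m ≤ n ∧ γ₁ ∈ DyckSet (m - 1) ∧ γ₂ ∈ DyckSet (n - m) ∧
      γ = joinPath m γ₁ γ₂ := by
  obtain ⟨m, hm, hmn, hret, hpos⟩ := hγ.1.exists_first_return hn
  refine ⟨m, _, _, hm, hmn, hγ.1.inner_mem_dyckSet hm hmn hret hpos,
    suffix_mem_dyckSet hγ hmn hret, ?_⟩
  funext x
  rcases Nat.eq_zero_or_pos x with rfl | hx
  · exact hγ.1.1
  rcases lt_or_ge x (2 * m) with hxm | hxm
  · rw [joinPath_of_lt hx hxm, if_pos (by omega), show 1 + (x - 1) = x by omega, sub_add_cancel]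
  · rw [joinPath_of_le hm hxm, show 2 * m + (x - 2 * m) = x by omega]

def permJoin (m n : ℕ) (f g : ℕ → ℤ) : ℕ → ℤ := fun i =>
  if i = 0 ∨ n < i then 0 else if i = 1 then m else if i ≤ m then f (i - 1) else g (i - m) + m

def permBlock (σ : ℕ → ℤ) (a b k : ℕ) : ℕ → ℤ := fun i =>
  if 1 ≤ i ∧ i ≤ k then σ (i + a) - b else 0

section permJoin

variable {m n : ℕ} {f g : ℕ → ℤ}

theorem permJoin_one (hn : 1 ≤ n) : permJoin m n f g 1 = m := by
  simp [permJoin, show ¬ n < 1 by omega]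

-- The three blocks take the values `m`, `[1, m)` and `(m, n]`: a value determines its block.
theorem permJoin_cases (hf : f ∈ Avoid231Set (m - 1)) (hg : g ∈ Avoid231Set (n - m)) {i : ℕ}
    (hi : i ∈ Set.Icc 1 n) :
    (i = 1 ∧ permJoin m n f g i = m) ∨
      (2 ≤ i ∧ i ≤ m ∧ permJoin m n f g i = f (i - 1) ∧ 1 ≤ f (i - 1) ∧ f (i - 1) < m) ∨
      (m < i ∧ i ≤ n ∧ permJoin m n f g i = g (i - m) + m ∧ 1 ≤ g (i - m) ∧ g (i - m) ≤ n - m) := by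
  obtain ⟨hi1, hin⟩ := hi
  have hval : permJoin m n f g i =
      if i = 1 then (m : ℤ) else if i ≤ m then f (i - 1) else g (i - m) + m := by
    simp [permJoin, show ¬ (i = 0 ∨ n < i) by omega]
  rcases hi1.eq_or_lt with rfl | h1i
  · exact Or.inl ⟨rfl, by rw [hval, if_pos rfl]⟩
  rcases Nat.lt_or_ge m i with hmi | hmi
  · have := hg.1.mapsTo (show i - m ∈ Set.Icc 1 (n - m) from ⟨by omega, by omega⟩)
    simp only [Set.mem_Icc] at this
    right; right
    rw [hval, if_neg (by omega), if_neg (by omega)]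
    exact ⟨hmi, hin, rfl, this.1, by rw [← Nat.cast_sub (by omega)]; exact this.2⟩
  · have := hf.1.mapsTo (show i - 1 ∈ Set.Icc 1 (m - 1) from ⟨by omega, by omega⟩)
    simp only [Set.mem_Icc] at this
    right; left
    rw [hval, if_neg (by omega), if_pos hmi]
    exact ⟨h1i, hmi, rfl, this.1, by omega⟩

theorem permJoin_injOn (hf : f ∈ Avoid231Set (m - 1)) (hg : g ∈ Avoid231Set (n - m)) :
    Set.InjOn (permJoin m n f g) (Set.Icc 1 n) := by
  intro i hi j hj hij
  rcases permJoin_cases hf hg hi with ⟨hi1, hi'⟩ | ⟨hi1, him, hi', hilo, hihi⟩ |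
      ⟨hmi, hin, hi', hilo, hihi⟩ <;>
    rcases permJoin_cases hf hg hj with ⟨hj1, hj'⟩ | ⟨hj1, hjm, hj', hjlo, hjhi⟩ |
      ⟨hmj, hjn, hj', hjlo, hjhi⟩ <;> try omega
  · have := hf.1.injOn (show i - 1 ∈ Set.Icc 1 (m - 1) from ⟨by omega, by omega⟩)
      (show j - 1 ∈ Set.Icc 1 (m - 1) from ⟨by omega, by omega⟩) (by omega)
    omega
  · have := hg.1.injOn (show i - m ∈ Set.Icc 1 (n - m) from ⟨by omega, by omega⟩)
      (show j - m ∈ Set.Icc 1 (n - m) from ⟨by omega, by omega⟩) (by omega)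
    omega

theorem permJoin_mem (hm : 1 ≤ m) (hmn : m ≤ n) (hf : f ∈ Avoid231Set (m - 1))
    (hg : g ∈ Avoid231Set (n - m)) : permJoin m n f g ∈ Avoid231Set n := by
  have hcases := fun {i} => permJoin_cases (i := i) hf hg
  have hmaps : Set.MapsTo (permJoin m n f g) (Set.Icc 1 n) (Set.Icc 1 n) := by
    intro i hi
    rcases hcases hi with ⟨-, h⟩ | ⟨-, -, h, h'⟩ | ⟨-, -, h, h'⟩ <;>
      simp only [Set.mem_Icc] <;> omega
  have hinj := permJoin_injOn hf hg
  refine ⟨⟨hmaps, hinj, ?_⟩, fun i hi => ?_, ?_⟩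
  · simpa using Finset.surjOn_of_injOn_of_card_le (s := Finset.Icc 1 n) (t := Finset.Icc 1 (n : ℤ))
      _ (by simpa using hmaps) (by simpa using hinj) (by simp)
  · simp only [Set.mem_Icc, not_and_or, not_le] at hi
    simp [permJoin, show i = 0 ∨ n < i by omega]
  · rintro ⟨i, j, k, hi, hj, hk, hij, hjk, hki, hij'⟩
    rcases hcases hi with ⟨hi1, hi'⟩ | ⟨hi1, him, hi', hilo, hihi⟩ | ⟨hmi, hin, hi', hilo, hihi⟩ <;>
      rcases hcases hj with ⟨hj1, hj'⟩ | ⟨hj1, hjm, hj', hjlo, hjhi⟩ |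
        ⟨hmj, hjn, hj', hjlo, hjhi⟩ <;>
      rcases hcases hk with ⟨hk1, hk'⟩ | ⟨hk1, hkm, hk', hklo, hkhi⟩ |
        ⟨hmk, hkn, hk', hklo, hkhi⟩ <;> try omega
    · exact hf.2.2 ⟨i - 1, j - 1, k - 1, ⟨by omega, by omega⟩, ⟨by omega, by omega⟩,
        ⟨by omega, by omega⟩, by omega, by omega, by omega, by omega⟩
    · exact hg.2.2 ⟨i - m, j - m, k - m, ⟨by omega, by omega⟩, ⟨by omega, by omega⟩,
        ⟨by omega, by omega⟩, by omega, by omega, by omega, by omega⟩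

theorem permBlock_permJoin_left (hmn : m ≤ n) (hf : ∀ i ∉ Set.Icc 1 (m - 1), f i = 0) :
    permBlock (permJoin m n f g) 1 0 (m - 1) = f := by
  funext i
  by_cases hi : i ∈ Set.Icc 1 (m - 1)
  · obtain ⟨hi1, him⟩ := hi
    simp [permBlock, permJoin, hi1, him, show ¬ n < i + 1 by omega, show i + 1 ≤ m by omega,
      show i ≠ 0 by omega]
  · rw [hf i hi]
    exact if_neg hi

theorem permBlock_permJoin_right (hm : 1 ≤ m) (hg : ∀ i ∉ Set.Icc 1 (n - m), g i = 0) :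
    permBlock (permJoin m n f g) m m (n - m) = g := by
  funext i
  by_cases hi : i ∈ Set.Icc 1 (n - m)
  · obtain ⟨hi1, hin⟩ := hi
    simp [permBlock, permJoin, hi1, hin, show ¬ n < i + m by omega, show ¬ i + m ≤ m by omega,
      show i + m ≠ 1 by omega, show i ≠ 0 by omega]
  · rw [hg i hi]
    exact if_neg hi

theorem permJoin_inj {m' : ℕ} {f' g' : ℕ → ℤ} (hn : 1 ≤ n) (hm : 1 ≤ m) (hmn : m ≤ n)
    (hf : ∀ i ∉ Set.Icc 1 (m - 1), f i = 0)
    (hg : ∀ i ∉ Set.Icc 1 (n - m), g i = 0) (hf' : ∀ i ∉ Set.Icc 1 (m' - 1), f' i = 0)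
    (hg' : ∀ i ∉ Set.Icc 1 (n - m'), g' i = 0) (h : permJoin m n f g = permJoin m' n f' g') :
    m = m' ∧ f = f' ∧ g = g' := by
  obtain rfl : m = m' := by
    have := congrFun h 1
    rwa [permJoin_one hn, permJoin_one hn, Nat.cast_inj] at this
  refine ⟨rfl, ?_, ?_⟩
  · rw [← permBlock_permJoin_left hmn hf (g := g), h, permBlock_permJoin_left hmn hf']
  · rw [← permBlock_permJoin_right hm hg (f := f), h, permBlock_permJoin_right hm hg']

end permJoin

theorem permBlock_mem {σ : ℕ → ℤ} {n a b k : ℕ} (hσ : σ ∈ Avoid231Set n) (hakn : a + k ≤ n)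
    (hmaps : Set.MapsTo σ (Set.Icc (a + 1) (a + k)) (Set.Icc (b + 1 : ℤ) (b + k))) :
    permBlock σ a b k ∈ Avoid231Set k := by
  have hval : ∀ i ∈ Set.Icc 1 k, permBlock σ a b k i = σ (i + a) - b := fun i hi =>
    if_pos hi
  have hblock : ∀ i ∈ Set.Icc 1 k, i + a ∈ Set.Icc (a + 1) (a + k) := fun i ⟨hi1, hik⟩ =>
    ⟨by omega, by omega⟩
  have hwhole : ∀ i ∈ Set.Icc 1 k, i + a ∈ Set.Icc 1 n := fun i ⟨hi1, hik⟩ =>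
    ⟨by omega, by omega⟩
  have hmaps' : Set.MapsTo (permBlock σ a b k) (Set.Icc 1 k) (Set.Icc 1 k) := by
    intro i hi
    have := hmaps (hblock i hi)
    simp only [Set.mem_Icc] at this ⊢
    rw [hval i hi]
    omega
  have hinj : Set.InjOn (permBlock σ a b k) (Set.Icc 1 k) := by
    intro i hi j hj hij
    rw [hval i hi, hval j hj, sub_left_inj] at hij
    have := hσ.1.injOn (hwhole i hi) (hwhole j hj) hij
    omega
  refine ⟨⟨hmaps', hinj, ?_⟩, fun i hi => if_neg hi, ?_⟩
  · simpa using Finset.surjOn_of_injOn_of_card_le (s := Finset.Icc 1 k) (t := Finset.Icc 1 (k : ℤ))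
      _ (by simpa using hmaps') (by simpa using hinj) (by simp)
  · rintro ⟨i, j, l, hi, hj, hl, hij, hjl, hli, hij'⟩
    rw [hval i hi, hval j hj, hval l hl] at *
    exact hσ.2.2 ⟨i + a, j + a, l + a, hwhole i hi, hwhole j hj, hwhole l hl, by omega, by omega,
      by omega, by omega⟩

theorem eq_permJoin_permBlock {σ : ℕ → ℤ} {n m : ℕ} (hσ : ∀ i ∉ Set.Icc 1 n, σ i = 0)
    (h1 : σ 1 = m) : σ = permJoin m n (permBlock σ 1 0 (m - 1)) (permBlock σ m m (n - m)) := by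
  funext i
  by_cases hi : i ∈ Set.Icc 1 n
  · obtain ⟨hi1, hin⟩ := hi
    simp only [permJoin, permBlock]
    split_ifs <;> try omega
    · subst_vars; exact h1
    · rw [show i - 1 + 1 = i by omega]; ring
    · rw [show i - m + m = i by omega]; ring
  · simp only [Set.mem_Icc, not_and_or, not_le] at hi
    simp [permJoin, hσ i (by simp only [Set.mem_Icc]; omega), show i = 0 ∨ n < i by omega]

namespace Avoid231Set

variable {σ : ℕ → ℤ} {n : ℕ}

theorem apply_lt_apply_one (hσ : σ ∈ Avoid231Set n) {j : ℕ} (hj : 2 ≤ j) (hjσ : (j : ℤ) ≤ σ 1) :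
    σ j < σ 1 := by
  have h1 : 1 ∈ Set.Icc 1 n :=
    ⟨le_rfl, by by_contra! hn; have := hσ.2.1 1 (by simp only [Set.mem_Icc]; omega); omega⟩
  obtain ⟨hbij, -, hav⟩ := hσ
  have hσ1 := hbij.mapsTo h1
  have hjn : j ∈ Set.Icc 1 n := ⟨by omega, by simp only [Set.mem_Icc] at hσ1; omega⟩
  by_contra! hle
  have hlt : σ 1 < σ j := lt_of_le_of_ne hle fun h => by have := hbij.injOn h1 hjn h; omega
  have hsurj : Set.SurjOn σ (Finset.Icc 2 (j - 1)) (Finset.Icc 1 (σ 1 - 1)) := by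
    intro t ht
    simp only [Finset.coe_Icc, Set.mem_Icc] at ht
    obtain ⟨p, hp, rfl⟩ := hbij.surjOn (show t ∈ Set.Icc 1 (n : ℤ) by
      simp only [Set.mem_Icc] at hσ1 ⊢; omega)
    have hp1 : p ≠ 1 := by rintro rfl; omega
    have hpj : p < j := by
      by_contra! hjp
      rcases hjp.eq_or_lt with rfl | hjp
      · omega
      exact hav ⟨1, j, p, h1, hjn, hp, by omega, hjp, ht.2.trans_lt (by omega), hlt⟩
    exact ⟨p, by simp only [Finset.coe_Icc, Set.mem_Icc] at hp ⊢; omega, rfl⟩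
  have := Finset.card_le_card_of_surjOn σ hsurj
  simp only [Nat.card_Icc, Int.card_Icc] at this
  omega

theorem apply_one_lt_apply (hσ : σ ∈ Avoid231Set n) {k : ℕ} (hkσ : σ 1 < k) (hkn : k ≤ n) :
    σ 1 < σ k := by
  have h1 : 1 ∈ Set.Icc 1 n :=
    ⟨le_rfl, by by_contra! hn; have := hσ.2.1 1 (by simp only [Set.mem_Icc]; omega); omega⟩
  have hσ1 := hσ.1.mapsTo h1
  simp only [Set.mem_Icc] at hσ1
  have hk : k ∈ Set.Icc 1 n := ⟨by omega, hkn⟩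
  obtain ⟨m, hm⟩ : ∃ m : ℕ, σ 1 = m := ⟨(σ 1).toNat, by omega⟩
  by_contra! hle
  have hlt : σ k < σ 1 := lt_of_le_of_ne hle fun h => by have := hσ.1.injOn hk h1 h; omega
  have hmaps : Set.MapsTo σ (insert k (Finset.Icc 2 m) : Finset ℕ) (Finset.Icc 1 (σ 1 - 1)) := by
    intro p hp
    simp only [Finset.coe_insert, Finset.coe_Icc, Set.mem_insert_iff, Set.mem_Icc] at hp ⊢
    have := hσ.1.mapsTo (show p ∈ Set.Icc 1 n by simp only [Set.mem_Icc]; omega)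
    simp only [Set.mem_Icc] at this
    rcases hp with rfl | ⟨hp2, hpm⟩
    · omega
    · have := apply_lt_apply_one hσ hp2 (by omega)
      omega
  have hinj : Set.InjOn σ (insert k (Finset.Icc 2 m) : Finset ℕ) := hσ.1.injOn.mono fun p hp => by
    simp only [Finset.coe_insert, Finset.coe_Icc, Set.mem_insert_iff, Set.mem_Icc] at hp ⊢
    omega
  have := Finset.card_le_card_of_injOn σ hmaps hinj
  rw [Finset.card_insert_of_notMem (by simp only [Finset.mem_Icc]; omega), Nat.card_Icc,
    Int.card_Icc] at this
  omega

end Avoid231Set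

theorem exists_eq_permJoin {σ : ℕ → ℤ} {n : ℕ} (hn : 1 ≤ n) (hσ : σ ∈ Avoid231Set n) :
    ∃ m f g, 1 ≤ m ∧ m ≤ n ∧ f ∈ Avoid231Set (m - 1) ∧ g ∈ Avoid231Set (n - m) ∧
      σ = permJoin m n f g := by
  have hσ1 := hσ.1.mapsTo (show 1 ∈ Set.Icc 1 n from ⟨le_rfl, hn⟩)
  simp only [Set.mem_Icc] at hσ1
  obtain ⟨m, hm⟩ : ∃ m : ℕ, σ 1 = m := ⟨(σ 1).toNat, by omega⟩
  refine ⟨m, _, _, by omega, by omega, permBlock_mem hσ (by omega) fun i hi => ?_,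
    permBlock_mem hσ (by omega) fun i hi => ?_, eq_permJoin_permBlock hσ.2.1 hm⟩
  all_goals
    simp only [Set.mem_Icc] at hi ⊢
    have := hσ.1.mapsTo (show i ∈ Set.Icc 1 n by simp only [Set.mem_Icc]; omega)
    simp only [Set.mem_Icc] at this
  · have := Avoid231Set.apply_lt_apply_one hσ (j := i) (by omega) (by omega)
    omega
  · have := Avoid231Set.apply_one_lt_apply hσ (k := i) (by omega) (by omega)
    omega

noncomputable def dyckPerm (n : ℕ) (γ : ℕ → ℤ) : ℕ → ℤ := fun i =>
  if 1 ≤ i ∧ i ≤ n then perm231 n γ i else 0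

theorem dyckPerm_of_not_mem {n : ℕ} {γ : ℕ → ℤ} : ∀ i ∉ Set.Icc 1 n, dyckPerm n γ i = 0 :=
  fun _ hi => if_neg hi

section joinPath

variable {m n : ℕ} {γ₁ γ₂ : ℕ → ℤ}

theorem perm231_joinPath_one (hm : 1 ≤ m) (hmn : m ≤ n) (h₁ : γ₁ ∈ DyckSet (m - 1))
    (h₂ : γ₂ ∈ DyckSet (n - m)) : perm231 n (joinPath m γ₁ γ₂) 1 = m := by
  have hγ := (joinPath_mem hm hmn h₁ h₂).1
  have h1 : joinPath m γ₁ γ₂ 1 = 1 := by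
    rw [joinPath_of_lt one_pos (by omega), Nat.sub_self, h₁.1.1, zero_add]
  have hv : vPos n (joinPath m γ₁ γ₂) 1 = 1 := (hγ.vPos_eq_iff le_rfl (by omega)).mpr
    ⟨Finset.mem_filter.mpr ⟨Finset.mem_Icc.mpr ⟨le_rfl, by omega⟩, h1⟩, by rw [h1]; norm_num⟩
  have hh : hgt n (joinPath m γ₁ γ₂) 1 = 1 := by rw [hgt, hv, h1]
  have hl : excLen n (joinPath m γ₁ γ₂) 1 = 2 * m := by
    refine IsLeast.csInf_eq ⟨⟨by omega, ?_⟩, fun l ⟨hl1, hl⟩ => ?_⟩ <;>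
      simp only [hv, hh, Nat.sub_self, zero_add, sub_self] at *
    · rw [joinPath_of_le hm le_rfl, Nat.sub_self, h₂.1.1]
    · by_contra! hlm
      rw [joinPath_of_lt (by omega) hlm] at hl
      linarith [nonneg_of_mem_dyckSet h₁ (l - 1)]
  rw [perm231, hl, hh, Nat.mul_div_cancel_left m two_pos]
  ring

theorem dyckPerm_joinPath (hm : 1 ≤ m) (hmn : m ≤ n) (h₁ : γ₁ ∈ DyckSet (m - 1))
    (h₂ : γ₂ ∈ DyckSet (n - m)) :
    dyckPerm n (joinPath m γ₁ γ₂) = permJoin m n (dyckPerm (m - 1) γ₁) (dyckPerm (n - m) γ₂) := by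
  have hγ := (joinPath_mem hm hmn h₁ h₂).1
  funext i
  by_cases hi : 1 ≤ i ∧ i ≤ n
  · simp only [dyckPerm, permJoin, if_pos hi, show ¬ (i = 0 ∨ n < i) by omega, if_false]
    split_ifs with hi1 him <;> try omega
    · subst hi1
      exact perm231_joinPath_one hm hmn h₁ h₂
    · obtain ⟨i, rfl⟩ : ∃ i', i = i' + 1 := ⟨i - 1, by omega⟩
      rw [hγ.perm231_shift h₁.1 (a := 1) (c := 1) (j := 1) rfl (by omega)
        (fun x hx => by rw [joinPath_of_lt (by omega) (by omega), Nat.add_sub_cancel_left]; rfl)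
        (by omega) (by omega)]
      simp
    · obtain ⟨i, rfl⟩ : ∃ i', i = i' + m := ⟨i - m, by omega⟩
      rw [hγ.perm231_shift h₂.1 (a := 2 * m) (c := 0) (j := m) (by omega) (by omega)
        (fun x hx => by rw [joinPath_of_le hm (by omega)]; simp) (by omega) (by omega)]
      simp
  · rw [dyckPerm, if_neg hi, permJoin, if_pos (by omega)]

end joinPath

theorem bijOn_dyckPerm_zero : Set.BijOn (dyckPerm 0) (DyckSet 0) (Avoid231Set 0) := by
  have hD : DyckSet 0 = {0} := by
    ext γ
    refine ⟨fun hγ => funext fun x => hγ.2 x (Nat.zero_le x), ?_⟩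
    rintro rfl
    exact ⟨⟨rfl, rfl, fun _ _ => le_rfl, fun x hx => by omega⟩, fun _ _ => rfl⟩
  have hA : Avoid231Set 0 = {0} := by
    ext σ
    refine ⟨fun hσ => funext fun i => hσ.2.1 i (by simp), ?_⟩
    rintro rfl
    refine ⟨?_, fun _ _ => rfl, fun ⟨i, _, _, hi, _⟩ => by simp at hi⟩
    simp [Set.BijOn, Set.MapsTo, Set.InjOn, Set.SurjOn]
  rw [hD, hA, Set.bijOn_singleton]
  funext i
  exact if_neg (by omega)

/-- The map `γ ↦ σ_γ`, `σ_γ i = i + l_i/2 - h_i`, is a bijection from Dyck paths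
of length `2n` onto 231-avoiding permutations of `[n]`. -/
theorem perm231_bijection (n : ℕ) :
    Set.BijOn (fun γ i => if 1 ≤ i ∧ i ≤ n then perm231 n γ i else 0)
      (DyckSet n) (Avoid231Set n) := by
  show Set.BijOn (dyckPerm n) (DyckSet n) (Avoid231Set n)
  induction n using Nat.strong_induction_on with
  | _ n IH =>
  rcases Nat.eq_zero_or_pos n with rfl | hn
  · exact bijOn_dyckPerm_zero
  refine ⟨fun γ hγ => ?_, fun γ hγ γ' hγ' h => ?_, fun σ hσ => ?_⟩
  · obtain ⟨m, γ₁, γ₂, hm, hmn, h₁, h₂, rfl⟩ := exists_eq_joinPath hn hγ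
    rw [dyckPerm_joinPath hm hmn h₁ h₂]
    exact permJoin_mem hm hmn ((IH _ (by omega)).mapsTo h₁) ((IH _ (by omega)).mapsTo h₂)
  · obtain ⟨m, γ₁, γ₂, hm, hmn, h₁, h₂, rfl⟩ := exists_eq_joinPath hn hγ
    obtain ⟨m', γ₁', γ₂', hm', hmn', h₁', h₂', rfl⟩ := exists_eq_joinPath hn hγ'
    rw [dyckPerm_joinPath hm hmn h₁ h₂, dyckPerm_joinPath hm' hmn' h₁' h₂'] at h
    obtain ⟨rfl, e₁, e₂⟩ := permJoin_inj hn hm hmn dyckPerm_of_not_mem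
      dyckPerm_of_not_mem dyckPerm_of_not_mem dyckPerm_of_not_mem h
    rw [(IH _ (by omega)).injOn h₁ h₁' e₁, (IH _ (by omega)).injOn h₂ h₂' e₂]
  · obtain ⟨m, f, g, hm, hmn, hf, hg, rfl⟩ := exists_eq_permJoin hn hσ
    obtain ⟨γ₁, h₁, rfl⟩ := (IH (m - 1) (by omega)).surjOn hf
    obtain ⟨γ₂, h₂, rfl⟩ := (IH (n - m) (by omega)).surjOn hg
    exact ⟨_, joinPath_mem hm hmn h₁ h₂, dyckPerm_joinPath hm hmn h₁ h₂⟩
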